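/- arXiv:2203.17268 — 5 statements merged into one kernel-verified Lean document; each statement's English description precedes it below -/
import Mathlib

section
/- Let $a_1 \le a_2 \le \cdots \le a_N$ and $b_1 \ge b_2 \ge \cdots \ge b_N$ be integers, and let $\sigma \in S_N$ satisfy $\sigma(i) < \sigma(i+1)$ whenever $a_i = a_{i+1}$ and $\sigma^{-1}(i) < \sigma^{-1}(i+1)$ whenever $b_i = b_{i+1}$. If $\sigma' \le \sigma$ in the Bruhat order on $S_N$, then $\max\{ b_{\sigma'(i)} - a_i : i \in [N] \} \ge \max\{ b_{\sigma(i)} - a_i : i \in [N] \}$. -/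
/-!
A Bruhat step from `τ` to `τ * (i j)` with `i < j` has `τ i < τ j`: composing with the
transposition when `τ i > τ j` cannot raise the inversion count. The step replaces
`b (τ i) - a i` by `b (τ j) - a i ≤ b (τ i) - a i` (as `b` is antitone) and `b (τ j) - a j`
by `b (τ i) - a j ≤ b (τ i) - a i` (as `a` is monotone), so the maximum of `b (τ k) - a k`
can only decrease going up in the Bruhat order.
-/

/-- Number of inversions of a permutation of `Fin N`. -/
def invCount {N : ℕ} (σ : Equiv.Perm (Fin N)) : ℕ :=
  (Finset.univ.filter (fun p : Fin N × Fin N => p.1 < p.2 ∧ σ p.2 < σ p.1)).card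

/-- One step up in the Bruhat order: multiply by a transposition, increasing length. -/
def BruhatStep {N : ℕ} (τ τ' : Equiv.Perm (Fin N)) : Prop :=
  ∃ i j : Fin N, τ' = τ * Equiv.swap i j ∧ invCount τ < invCount τ'

/-- Bruhat order on the symmetric group `S_N`. -/
def BruhatLE {N : ℕ} (σ' σ : Equiv.Perm (Fin N)) : Prop :=
  Relation.ReflTransGen BruhatStep σ' σ

open Equiv Finset
variable {N : ℕ}

lemma lt_of_swap_reverses (π : Perm (Fin N)) {i j x y : Fin N} (hij : i < j) (hπ : π i < π j)
    (hxy : x < y) (hyx : π y < π x) (hs : swap i j y < swap i j x) :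
    π (swap i j y) < π (swap i j x) := by
  simp only [swap_apply_def] at hs ⊢
  split_ifs at hs ⊢ <;> grind

theorem invCount_le_invCount_mul_swap (π : Perm (Fin N)) {i j : Fin N} (hij : i < j)
    (hπ : π i < π j) : invCount π ≤ invCount (π * swap i j) := by
  set s := swap i j
  -- An inversion whose order `s` preserves is sent to its `s`-image; one whose order `s`
  -- reverses is still an inversion of `π * s`, because `π i < π j`.
  refine card_le_card_of_injOn
    (fun p => if s p.1 < s p.2 then Prod.map s s p else p) (fun ⟨x, y⟩ hp => ?_) ?_
  · simp only [mem_coe, mem_filter, mem_univ, true_and] at hp ⊢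
    split_ifs with hs
    · simpa [s] using ⟨hs, hp.2⟩
    · exact ⟨hp.1, lt_of_swap_reverses π hij hπ hp.1 hp.2
        ((not_lt.1 hs).lt_of_ne (by simpa using hp.1.ne'))⟩
  · rintro ⟨x, y⟩ hp ⟨x', y'⟩ hp' h
    simp only [mem_coe, mem_filter, mem_univ, true_and] at hp hp' h
    simp only [Prod.map, Prod.ext_iff] at h ⊢
    split_ifs at h <;> grind [swap_apply_self]

lemma lt_of_invCount_lt_invCount_mul_swap {τ : Perm (Fin N)} {i j : Fin N} (hij : i < j)
    (hlt : invCount τ < invCount (τ * swap i j)) : τ i < τ j := by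
  by_contra! hτ
  have hτ' : (τ * swap i j) i < (τ * swap i j) j := by
    simpa using hτ.lt_of_ne (τ.injective.ne hij.ne')
  have := invCount_le_invCount_mul_swap _ hij hτ'
  rw [mul_assoc, swap_mul_self, mul_one] at this
  omega

theorem BruhatStep.exists_lt {τ τ' : Perm (Fin N)} (h : BruhatStep τ τ') :
    ∃ i j, i < j ∧ τ i < τ j ∧ τ' = τ * swap i j := by
  obtain ⟨i, j, rfl, hlt⟩ := h
  rcases lt_trichotomy i j with hij | rfl | hij
  · exact ⟨i, j, hij, lt_of_invCount_lt_invCount_mul_swap hij hlt, rfl⟩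
  · rw [swap_self] at hlt
    exact absurd hlt (lt_irrefl _)
  · rw [swap_comm] at hlt ⊢
    exact ⟨j, i, hij, lt_of_invCount_lt_invCount_mul_swap hij hlt, rfl⟩

section Values

variable {β : Type*} [AddCommGroup β] [LinearOrder β] [IsOrderedAddMonoid β]
  {a b : Fin N → β}

lemma exists_sub_le_of_mul_swap (ha : Monotone a) (hb : Antitone b) {τ : Perm (Fin N)}
    {i j : Fin N} (hij : i < j) (hτ : τ i < τ j) (k : Fin N) :
    ∃ m, b ((τ * swap i j) k) - a k ≤ b (τ m) - a m := by
  rcases eq_or_ne k i with rfl | hki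
  · exact ⟨k, by simpa using sub_le_sub_right (hb hτ.le) (a k)⟩
  rcases eq_or_ne k j with rfl | hkj
  · exact ⟨i, by simpa using sub_le_sub_left (ha hij.le) (b (τ i))⟩
  · exact ⟨k, by simp [swap_apply_of_ne_of_ne hki hkj]⟩

lemma sup'_sub_le_of_bruhatStep (hne : (univ : Finset (Fin N)).Nonempty) (ha : Monotone a)
    (hb : Antitone b) {τ τ' : Perm (Fin N)} (h : BruhatStep τ τ') :
    univ.sup' hne (fun k => b (τ' k) - a k) ≤ univ.sup' hne (fun k => b (τ k) - a k) := by
  obtain ⟨i, j, hij, hτ, rfl⟩ := h.exists_lt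
  refine sup'_le _ _ fun k _ => ?_
  obtain ⟨m, hm⟩ := exists_sub_le_of_mul_swap ha hb hij hτ k
  exact le_sup'_of_le _ (mem_univ m) hm

lemma sup'_sub_le_of_bruhatLE (hne : (univ : Finset (Fin N)).Nonempty) (ha : Monotone a)
    (hb : Antitone b) {σ σ' : Perm (Fin N)} (h : BruhatLE σ' σ) :
    univ.sup' hne (fun k => b (σ k) - a k) ≤ univ.sup' hne (fun k => b (σ' k) - a k) := by
  induction h with
  | refl => rfl
  | tail _ hstep ih => exact (sup'_sub_le_of_bruhatStep hne ha hb hstep).trans ih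

end Values

theorem stmt0_general {N : ℕ} (hN : 0 < N) (a b : Fin N → ℤ)
    (ha : ∀ i j : Fin N, i ≤ j → a i ≤ a j)
    (hb : ∀ i j : Fin N, i ≤ j → b j ≤ b i)
    (σ σ' : Equiv.Perm (Fin N))
    (hle : BruhatLE σ' σ) :
    Finset.univ.sup' ⟨⟨0, hN⟩, Finset.mem_univ _⟩ (fun i => b (σ i) - a i) ≤
      Finset.univ.sup' ⟨⟨0, hN⟩, Finset.mem_univ _⟩ (fun i => b (σ' i) - a i) :=
  sup'_sub_le_of_bruhatLE _ (fun i j => ha i j) (fun i j => hb i j) hle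

theorem stmt0 {N : ℕ} (hN : 0 < N) (a b : Fin N → ℤ)
    (ha : ∀ i j : Fin N, i ≤ j → a i ≤ a j)
    (hb : ∀ i j : Fin N, i ≤ j → b j ≤ b i)
    (σ σ' : Equiv.Perm (Fin N))
    (hσa : ∀ i j : Fin N, i < j → a i = a j → σ i < σ j)
    (hσb : ∀ i j : Fin N, i < j → b i = b j → σ⁻¹ i < σ⁻¹ j)
    (hle : BruhatLE σ' σ) :
    Finset.univ.sup' ⟨⟨0, hN⟩, Finset.mem_univ _⟩ (fun i => b (σ i) - a i) ≤
      Finset.univ.sup' ⟨⟨0, hN⟩, Finset.mem_univ _⟩ (fun i => b (σ' i) - a i) :=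
  stmt0_general hN a b ha hb σ σ' hle
end

section
/- Let $k \ge 1$ and let $I_T = \{1-a, \ldots, k-a+1\} \setminus \{k-b\}$ and $I_{T'} = \{1-c, \ldots, k-c+1\} \setminus \{k-d\}$ be two $k$-element sets of integers, where $a \le b < a+k-1$ and $c \le d < c+k-1$. Then $I_T$ and $I_{T'}$ are not weakly separated if and only if $k-b \in I_{T'}$, $k-d \in I_T$, and $(a-c)(b-d) > 0$. -/
/-- `A < B` for finite sets of integers: every element of `A` is less than every element of `B`. -/
def FinsetLT (A B : Finset ℤ) : Prop := ∀ x ∈ A, ∀ y ∈ B, x < y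

/-- Weak separation of two sets of integers (Leclerc–Zelevinsky). -/
def WeaklySeparated (I J : Finset ℤ) : Prop :=
  (∃ J' J'' : Finset ℤ, Disjoint J' J'' ∧ J' ∪ J'' = J \ I ∧
      FinsetLT J' (I \ J) ∧ FinsetLT (I \ J) J'') ∨
  (∃ I' I'' : Finset ℤ, Disjoint I' I'' ∧ I' ∪ I'' = I \ J ∧
      FinsetLT I' (J \ I) ∧ FinsetLT (J \ I) I'')

lemma not_ws_iff (I J : Finset ℤ) :
    ¬ WeaklySeparated I J ↔
      ((∃ i1 ∈ I \ J, ∃ j ∈ J \ I, ∃ i2 ∈ I \ J, i1 < j ∧ j < i2) ∧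
       (∃ j1 ∈ J \ I, ∃ i ∈ I \ J, ∃ j2 ∈ J \ I, j1 < i ∧ i < j2)) := by
  constructor
  · intro hws
    by_contra hcon
    apply hws
    rw [not_and_or] at hcon
    rcases hcon with h | h
    · push_neg at h
      left
      refine ⟨(J \ I).filter (fun j => ∃ i ∈ I \ J, j < i),
              (J \ I).filter (fun j => ¬ ∃ i ∈ I \ J, j < i),
              Finset.disjoint_filter_filter_not _ _ _,
              Finset.filter_union_filter_not_eq _ _, ?_, ?_⟩
      · intro x hx y hy
        simp only [Finset.mem_filter] at hx
        obtain ⟨hxJ, i, hi, hxi⟩ := hx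
        by_contra hxy
        push_neg at hxy
        have hne : y ≠ x := by
          intro hyx
          rw [Finset.mem_sdiff] at hy hxJ
          exact hxJ.2 (hyx ▸ hy.1)
        have hyx : y < x := lt_of_le_of_ne hxy hne
        exact absurd (h y hy x hxJ i hi hyx) (by omega)
      · intro x hx y hy
        simp only [Finset.mem_filter] at hy
        obtain ⟨hyJ, hy2⟩ := hy
        push_neg at hy2
        have hxy : x ≤ y := hy2 x hx
        have hne : x ≠ y := by
          intro hxy'
          rw [Finset.mem_sdiff] at hx hyJ
          exact hyJ.2 (hxy' ▸ hx.1)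
        exact lt_of_le_of_ne hxy hne
    · push_neg at h
      right
      refine ⟨(I \ J).filter (fun i => ∃ j ∈ J \ I, i < j),
              (I \ J).filter (fun i => ¬ ∃ j ∈ J \ I, i < j),
              Finset.disjoint_filter_filter_not _ _ _,
              Finset.filter_union_filter_not_eq _ _, ?_, ?_⟩
      · intro x hx y hy
        simp only [Finset.mem_filter] at hx
        obtain ⟨hxI, j, hj, hxj⟩ := hx
        by_contra hxy
        push_neg at hxy
        have hne : y ≠ x := by
          intro hyx
          rw [Finset.mem_sdiff] at hy hxI
          exact hxI.2 (hyx ▸ hy.1)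
        have hyx : y < x := lt_of_le_of_ne hxy hne
        exact absurd (h y hy x hxI j hj hyx) (by omega)
      · intro x hx y hy
        simp only [Finset.mem_filter] at hy
        obtain ⟨hyI, hy2⟩ := hy
        push_neg at hy2
        have hxy : x ≤ y := hy2 x hx
        have hne : x ≠ y := by
          intro hxy'
          rw [Finset.mem_sdiff] at hx hyI
          exact hyI.2 (hxy' ▸ hx.1)
        exact lt_of_le_of_ne hxy hne
  · rintro ⟨⟨i1, hi1, j, hj, i2, hi2, h1, h2⟩, ⟨j1, hj1, i, hi, j2, hj2, h3, h4⟩⟩ hws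
    rcases hws with ⟨J', J'', _, hu, hl1, hl2⟩ | ⟨I', I'', _, hu, hl1, hl2⟩
    · rw [← hu, Finset.mem_union] at hj
      rcases hj with hj | hj
      · exact absurd (hl1 j hj i1 hi1) (by omega)
      · exact absurd (hl2 i2 hi2 j hj) (by omega)
    · rw [← hu, Finset.mem_union] at hi
      rcases hi with hi | hi
      · exact absurd (hl1 i hi j1 hj1) (by omega)
      · exact absurd (hl2 j2 hj2 i hi) (by omega)

theorem stmt3 (k a b c d : ℤ) (hk : 1 ≤ k)
    (hab : a ≤ b) (hb : b < a + k - 1) (hcd : c ≤ d) (hd : d < c + k - 1) :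
    ¬ WeaklySeparated ((Finset.Icc (1 - a) (k - a + 1)).erase (k - b))
        ((Finset.Icc (1 - c) (k - c + 1)).erase (k - d)) ↔
      (k - b ∈ (Finset.Icc (1 - c) (k - c + 1)).erase (k - d) ∧
       k - d ∈ (Finset.Icc (1 - a) (k - a + 1)).erase (k - b) ∧
       (a - c) * (b - d) > 0) := by
  have hprod : (a - c) * (b - d) > 0 ↔ ((c < a ∧ d < b) ∨ (a < c ∧ b < d)) := by
    rw [gt_iff_lt, mul_pos_iff]
    constructor
    · rintro (⟨h1, h2⟩ | ⟨h1, h2⟩)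
      · left; omega
      · right; omega
    · rintro (⟨h1, h2⟩ | ⟨h1, h2⟩)
      · left; omega
      · right; omega
  rw [not_ws_iff, hprod]
  simp only [Finset.mem_sdiff, Finset.mem_erase, Finset.mem_Icc]
  constructor
  · rintro ⟨⟨i1, hi1, j, hj, i2, hi2, h1, h2⟩, ⟨j1, hj1, i, hi, j2, hj2, h3, h4⟩⟩
    refine ⟨by omega, by omega, by omega⟩
  · rintro ⟨hp, hq, hs | hs⟩
    · exact ⟨⟨1 - a, by omega, k - b, by omega, k - d, by omega, by omega, by omega⟩,
        ⟨k - b, by omega, k - d, by omega, k - c + 1, by omega, by omega, by omega⟩⟩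
    · exact ⟨⟨k - d, by omega, k - b, by omega, k - a + 1, by omega, by omega, by omega⟩,
        ⟨1 - c, by omega, k - d, by omega, k - b, by omega, by omega, by omega⟩⟩
end

section
/- Let $k \ge 1$, and let $[a,b]$ and $[c,d]$ be two integer intervals with $b - a + 1 < k$ and $d - c + 1 < k$. Set $I = \{1-a, \ldots, k-a+1\} \setminus \{k-b\}$ and $J = \{1-c, \ldots, k-c+1\} \setminus \{k-d\}$. Then $I$ and $J$ are not weakly separated if and only if the segments $[a,b]$ and $[c,d]$ are linked and $k > \max(d-a,\ b-c)$. -/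
/-- The segment `[a,b]` precedes the segment `[c,d]`. -/
def SegPrec (a b c d : ℤ) : Prop := a + 1 ≤ c ∧ c ≤ b + 1 ∧ b + 1 ≤ d

/-- Two segments are linked if one precedes the other. -/
def SegLinked (a b c d : ℤ) : Prop := SegPrec a b c d ∨ SegPrec c d a b

lemma part_iff (S T : Finset ℤ) (hST : Disjoint S T) :
    (∃ P Q : Finset ℤ, Disjoint P Q ∧ P ∪ Q = S ∧ FinsetLT P T ∧ FinsetLT T Q) ↔
      ¬ ∃ y ∈ S, ∃ x1 ∈ T, ∃ x2 ∈ T, x1 < y ∧ y < x2 := by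
  constructor
  · rintro ⟨P, Q, hPQ, hU, hP, hQ⟩ ⟨y, hy, x1, hx1, x2, hx2, h1, h2⟩
    rw [← hU] at hy
    rcases Finset.mem_union.1 hy with h | h
    · exact absurd (hP y h x1 hx1) (by omega)
    · exact absurd (hQ x2 hx2 y h) (by omega)
  · intro hno
    refine ⟨S.filter (fun y => ∀ x ∈ T, y < x), S \ S.filter (fun y => ∀ x ∈ T, y < x),
      Finset.disjoint_sdiff, Finset.union_sdiff_of_subset (Finset.filter_subset _ _), ?_, ?_⟩
    · intro y hy x hx
      exact (Finset.mem_filter.1 hy).2 x hx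
    · intro x hx y hy
      rw [Finset.mem_sdiff, Finset.mem_filter] at hy
      obtain ⟨hyS, hy2⟩ := hy
      push_neg at hy2
      obtain ⟨x1, hx1, hx1y⟩ := hy2 hyS
      have hne1 : x1 ≠ y := fun h => Finset.disjoint_right.1 hST (h ▸ hx1) hyS
      have hne2 : y ≠ x := fun h => Finset.disjoint_right.1 hST (h ▸ hx) hyS
      by_contra hxy
      push_neg at hxy
      exact hno ⟨y, hyS, x1, hx1, x, hx, by omega⟩

lemma ws_iff (I J : Finset ℤ) : WeaklySeparated I J ↔
    (¬ ∃ y ∈ J \ I, ∃ x1 ∈ I \ J, ∃ x2 ∈ I \ J, x1 < y ∧ y < x2) ∨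
    (¬ ∃ y ∈ I \ J, ∃ x1 ∈ J \ I, ∃ x2 ∈ J \ I, x1 < y ∧ y < x2) := by
  have hd : ∀ A B : Finset ℤ, Disjoint (B \ A) (A \ B) := by
    intro A B
    rw [Finset.disjoint_left]
    intro x hx hx'
    simp only [Finset.mem_sdiff] at hx hx'
    tauto
  exact or_congr (part_iff _ _ (hd I J)) (part_iff _ _ (hd J I))

theorem stmt4 (k a b c d : ℤ) (hk : 1 ≤ k)
    (hab : a ≤ b) (hcd : c ≤ d)
    (hlen1 : b - a + 1 < k) (hlen2 : d - c + 1 < k) :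
    ¬ WeaklySeparated ((Finset.Icc (1 - a) (k - a + 1)).erase (k - b))
        ((Finset.Icc (1 - c) (k - c + 1)).erase (k - d)) ↔
      (SegLinked a b c d ∧ k > max (d - a) (b - c)) := by
  rw [ws_iff, not_or, not_not, not_not]
  simp only [Finset.mem_sdiff, Finset.mem_erase, Finset.mem_Icc]
  constructor
  · rintro ⟨⟨y, hy, x1, hx1, x2, hx2, h⟩, ⟨y', hy', x1', hx1', x2', hx2', h'⟩⟩
    unfold SegLinked SegPrec
    rw [gt_iff_lt, max_lt_iff]
    omega
  · rintro ⟨hl, hmax⟩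
    rw [gt_iff_lt, max_lt_iff] at hmax
    unfold SegLinked SegPrec at hl
    rcases hl with h | h
    · exact ⟨⟨k - b, by omega, k - d, by omega, k + 1 - a, by omega, by omega⟩,
             ⟨k - d, by omega, -a, by omega, k - b, by omega, by omega⟩⟩
    · exact ⟨⟨k - b, by omega, -c, by omega, k - d, by omega, by omega⟩,
             ⟨k - d, by omega, k - b, by omega, k + 1 - c, by omega, by omega⟩⟩
end

section
/- Let $k \ge 2$, $(i,p)$ with $1 \le i \le k-1$ and $i - p$ odd. In the Laurent polynomial ring $\mathbb{Z}[Y_{m,r}^{\pm 1}]$, consider the sum over all $1 \le j_1 < \cdots < j_i \le k$ of the monomials $\prod_{m=1}^i Y_{j_m, p+i+j_m-2m} (Y_{j_m - 1, p+i+j_m-2m+1})^{-1}$ (with the convention $Y_{0,r} = Y_{k,r} = 1$). Then a summand has exactly one variable occurring with negative exponent (after cancellation) if and only if the index tuple has the form $(1, 2, \ldots, q, q+r+1, q+r+2, \ldots, r+i)$ for some $0 \le q \le i-1$ and $1 \le r \le k-i$, in which case the monomial equals $Y_{q, p+i-q} (Y_{q+r, p+i+r-q})^{-1} Y_{i+r,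 p+r}$. -/
/-- Exponent contribution of the variable `w = (m, r)` in a monomial containing the single
factor `Y_w`, with the conventions `Y_{0,r} = Y_{k,r} = 1`. -/
def singleVar (k : ℤ) (v w : ℤ × ℤ) : ℤ :=
  if w.1 = 0 ∨ w.1 = k then 0 else if v = w then 1 else 0

/-- The exponent of the variable `v` in the summand of Nakajima's q-character formula for
`L(Y_{i,p})` corresponding to the index tuple `j₁ < ⋯ < j_i` (indexed here by `Fin N`):
`∏_{m=1}^{i} Y_{j_m, p+i+j_m-2m} (Y_{j_m - 1, p+i+j_m-2m+1})⁻¹`. -/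
def expo (k i p : ℤ) {N : ℕ} (j : Fin N → ℤ) (v : ℤ × ℤ) : ℤ :=
  ∑ m : Fin N,
    (singleVar k v (j m, p + i + j m - 2 * ((m : ℕ) + 1)) -
      singleVar k v (j m - 1, p + i + j m - 2 * ((m : ℕ) + 1) + 1))

open scoped Classical

lemma sv_eq (k a b : ℤ) (v : ℤ × ℤ) (h1 : 1 ≤ a) (h2 : a ≤ k) :
    singleVar k v (a, b) = if a ≠ k ∧ v = (a, b) then 1 else 0 := by
  unfold singleVar
  split_ifs <;> simp_all <;> omega

lemma sum_ind {N : ℕ} (c : Fin N → Prop) (huniq : ∀ a b, c a → c b → a = b) :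
    ∑ m : Fin N, (if c m then (1:ℤ) else 0) = if ∃ m, c m then 1 else 0 := by
  by_cases h : ∃ m, c m
  · obtain ⟨m₀, h₀⟩ := h
    rw [if_pos ⟨m₀, h₀⟩, Finset.sum_eq_single m₀, if_pos h₀]
    · intro b _ hb; exact if_neg (fun hc => hb (huniq b m₀ hc h₀))
    · intro hm; exact absurd (Finset.mem_univ m₀) hm
  · rw [if_neg h]; exact Finset.sum_eq_zero (fun m _ => if_neg (fun hc => h ⟨m, hc⟩))

def PosC (k i p : ℤ) {N : ℕ} (j : Fin N → ℤ) (m : Fin N) (v : ℤ × ℤ) : Prop :=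
  j m ≠ k ∧ v = (j m, p + i + j m - 2 * ((m : ℕ) + 1))

def NegC (k i p : ℤ) {N : ℕ} (j : Fin N → ℤ) (m : Fin N) (v : ℤ × ℤ) : Prop :=
  j m ≠ 1 ∧ v = (j m - 1, p + i + j m - 2 * ((m : ℕ) + 1) + 1)

lemma expo_eq (k i p : ℤ) {N : ℕ} (j : Fin N → ℤ) (hmono : StrictMono j) (hlo : ∀ m, 1 ≤ j m) (hhi : ∀ m, j m ≤ k)
    (v : ℤ × ℤ) :
    expo k i p j v = (if ∃ m, PosC k i p j m v then 1 else 0) -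
      (if ∃ m, NegC k i p j m v then 1 else 0) := by
  unfold expo
  rw [Finset.sum_sub_distrib]
  congr 1
  · rw [← sum_ind (fun m => PosC k i p j m v) ?uniq]
    case uniq =>
      intro a b ha hb
      apply hmono.injective
      have := ha.2; have := hb.2
      have h1 : v.1 = j a := by rw [ha.2]
      have h2 : v.1 = j b := by rw [hb.2]
      omega
    refine Finset.sum_congr rfl fun m _ => ?_
    rw [sv_eq k _ _ v (hlo m) (hhi m)]
    unfold PosC
    split_ifs <;> tauto
  · rw [← sum_ind (fun m => NegC k i p j m v) ?uniq]
    case uniq =>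
      intro a b ha hb
      apply hmono.injective
      have h1 : v.1 = j a - 1 := by rw [ha.2]
      have h2 : v.1 = j b - 1 := by rw [hb.2]
      omega
    refine Finset.sum_congr rfl fun m _ => ?_
    have h1 : 1 ≤ j m - 1 ∨ j m = 1 := by have := hlo m; omega
    rcases h1 with h1 | h1
    · rw [sv_eq k _ _ v h1 (by have := hhi m; omega)]
      unfold NegC
      have h2 : j m - 1 ≠ k := by have := hhi m; omega
      have h3 : j m ≠ 1 := by omega
      split_ifs <;> tauto
    · unfold singleVar NegC
      simp [h1]

def Pgap {N : ℕ} (j : Fin N → ℤ) (s : Fin N) : Prop :=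
  2 ≤ j s ∧ ∀ t : Fin N, (t : ℕ) + 1 = (s : ℕ) → j t + 1 < j s

lemma key1 (k i p : ℤ) {N : ℕ} (j : Fin N → ℤ) (hmono : StrictMono j)
    (hlo : ∀ m, 1 ≤ j m) (hhi : ∀ m, j m ≤ k) (v : ℤ × ℤ) :
    expo k i p j v < 0 ↔ ∃ s : Fin N, Pgap j s ∧
      v = (j s - 1, p + i + j s - 2 * ((s : ℕ) + 1) + 1) := by
  have hnif : expo k i p j v < 0 ↔
      (¬ ∃ m, PosC k i p j m v) ∧ (∃ m, NegC k i p j m v) := by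
    rw [expo_eq k i p j hmono hlo hhi]
    by_cases hP : ∃ m, PosC k i p j m v <;>
      by_cases hQ : ∃ m, NegC k i p j m v <;> simp [hP, hQ]
  rw [hnif]
  constructor
  · rintro ⟨hP, m, hm1, hm2⟩
    refine ⟨m, ⟨by have := hlo m; omega, ?_⟩, hm2⟩
    intro t ht
    have hlt : j t < j m := hmono (by rw [Fin.lt_def]; omega)
    by_contra hc
    have hje : j t = j m - 1 := by omega
    apply hP
    refine ⟨t, ⟨by have := hhi m; omega, ?_⟩⟩
    rw [hm2]
    have h2 : ((t : ℕ) : ℤ) + 1 = ((m : ℕ) : ℤ) := by exact_mod_cast ht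
    ext <;> simp <;> omega
  · rintro ⟨s, ⟨hs2, hsg⟩, rfl⟩
    constructor
    · rintro ⟨m, hmk, hmv⟩
      have h1 : j m = j s - 1 := by
        have := congrArg Prod.fst hmv; simpa using this.symm
      have hms : (m : ℕ) < (s : ℕ) := by
        rw [← Fin.lt_def, ← hmono.lt_iff_lt]; omega
      have hsN : (s : ℕ) - 1 < N := by omega
      have hgap := hsg ⟨(s : ℕ) - 1, hsN⟩ (by simp; omega)
      have hmt : j m ≤ j ⟨(s : ℕ) - 1, hsN⟩ := hmono.monotone (by rw [Fin.le_def]; simp; omega)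
      omega
    · exact ⟨s, by omega, rfl⟩

lemma main1 (k i p : ℤ) {N : ℕ} (j : Fin N → ℤ) (hmono : StrictMono j)
    (hlo : ∀ m, 1 ≤ j m) (hhi : ∀ m, j m ≤ k) :
    (∃! v : ℤ × ℤ, expo k i p j v < 0) ↔ ∃! s : Fin N, Pgap j s := by
  constructor
  · rintro ⟨v, hv, hvu⟩
    obtain ⟨s, hs, rfl⟩ := (key1 k i p j hmono hlo hhi v).mp hv
    refine ⟨s, hs, fun s' hs' => ?_⟩
    have h' := (key1 k i p j hmono hlo hhi _).mpr ⟨s', hs', rfl⟩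
    have heq := hvu _ h'
    have h1 : j s' - 1 = j s - 1 := by
      have := congrArg Prod.fst heq; simpa using this
    exact hmono.injective (by omega)
  · rintro ⟨s, hs, hsu⟩
    refine ⟨(j s - 1, p + i + j s - 2 * ((s : ℕ) + 1) + 1),
      (key1 k i p j hmono hlo hhi _).mpr ⟨s, hs, rfl⟩, ?_⟩
    intro v hv
    obtain ⟨s', hs', rfl⟩ := (key1 k i p j hmono hlo hhi v).mp hv
    rw [hsu s' hs']

lemma main2 (k i : ℤ) (hi1 : 1 ≤ i) (hik : i ≤ k - 1) {N : ℕ} (hN : (N : ℤ) = i)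
    (j : Fin N → ℤ) (hmono : StrictMono j)
    (hlo : ∀ m, 1 ≤ j m) (hhi : ∀ m, j m ≤ k) :
    (∃! s : Fin N, Pgap j s) ↔
      ∃ q r : ℤ, 0 ≤ q ∧ q ≤ i - 1 ∧ 1 ≤ r ∧ r ≤ k - i ∧
        ∀ m : Fin N,
          j m = if ((m : ℕ) : ℤ) + 1 ≤ q then ((m : ℕ) : ℤ) + 1
                else ((m : ℕ) : ℤ) + 1 + r := by
  have hN1 : 1 ≤ N := by omega
  constructor
  · rintro ⟨s₀, hs₀, hsu⟩
    set q : ℤ := ((s₀ : ℕ) : ℤ) with hq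
    set r : ℤ := j s₀ - q - 1 with hr
    have C : ∀ n : ℕ, (hn : n < N) →
        j ⟨n, hn⟩ = if (n : ℤ) < q then (n : ℤ) + 1 else (n : ℤ) + 1 + r := by
      intro n
      induction n with
      | zero =>
        intro hn
        simp only [Nat.cast_zero]
        by_cases h0 : (0 : ℤ) < q
        · rw [if_pos h0]
          by_contra hne
          have h2 : 2 ≤ j ⟨0, hn⟩ := by have := hlo ⟨0, hn⟩; omega
          have hP : Pgap j ⟨0, hn⟩ :=
            ⟨h2, fun t ht => absurd ht (by simp only [Fin.val_mk]; omega)⟩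
          have h01 := hsu _ hP
          have h02 : ((⟨0, hn⟩ : Fin N) : ℕ) = (s₀ : ℕ) := congrArg Fin.val h01
          simp only [Fin.val_mk] at h02
          omega
        · rw [if_neg h0]
          have hs0 : s₀ = ⟨0, hn⟩ := Fin.ext (by simp only [Fin.val_mk]; omega)
          rw [← hs0]
          omega
      | succ n ih =>
        intro hn
        have hn' : n < N := by omega
        have ihn := ih hn'
        have hlt : j ⟨n, hn'⟩ < j ⟨n + 1, hn⟩ :=
          hmono (by rw [Fin.lt_def]; simp only [Fin.val_mk]; omega)
        have hng : j ⟨n + 1, hn⟩ = j ⟨n, hn'⟩ + 1 ∨ ((n : ℤ) + 1 = q) := by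
          by_contra hc
          push_neg at hc
          obtain ⟨hc1, hc2⟩ := hc
          have hP : Pgap j ⟨n + 1, hn⟩ := by
            refine ⟨by have := hlo ⟨n, hn'⟩; omega, fun t ht => ?_⟩
            simp only [Fin.val_mk] at ht
            have htn : t = ⟨n, hn'⟩ := Fin.ext (by simp only [Fin.val_mk]; omega)
            rw [htn]; omega
          have h01 := hsu _ hP
          have h02 : ((⟨n + 1, hn⟩ : Fin N) : ℕ) = (s₀ : ℕ) := congrArg Fin.val h01
          simp only [Fin.val_mk] at h02
          omega
        rcases hng with hng | hng
        · rw [hng, ihn]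
          have hq1 : (n : ℤ) + 1 ≠ q := by
            intro h
            have hs0 : s₀ = ⟨n + 1, hn⟩ := Fin.ext (by simp only [Fin.val_mk]; omega)
            have h2 := hs₀.2 ⟨n, hn'⟩ (by rw [hs0])
            rw [hs0] at h2
            omega
          push_cast
          split_ifs <;> omega
        · have hs0 : s₀ = ⟨n + 1, hn⟩ := Fin.ext (by simp only [Fin.val_mk]; omega)
          have h5 : j ⟨n + 1, hn⟩ = q + 1 + r := by rw [← hs0]; omega
          rw [h5]
          push_cast
          rw [if_neg (by omega)]
          omega
    have hs2N := s₀.2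
    have hq0 : 0 ≤ q := by positivity
    have hqi : q ≤ i - 1 := by omega
    have hr1 : 1 ≤ r := by
      by_cases h0 : (s₀ : ℕ) = 0
      · have := hs₀.1; omega
      · have hn' : (s₀ : ℕ) - 1 < N := by omega
        have h2 := hs₀.2 ⟨(s₀ : ℕ) - 1, hn'⟩ (by simp only [Fin.val_mk]; omega)
        have h3 := C ((s₀ : ℕ) - 1) hn'
        rw [if_pos (by omega)] at h3
        omega
    have hrk : r ≤ k - i := by
      have hn' : N - 1 < N := by omega
      have h3 := C (N - 1) hn'
      rw [if_neg (by omega)] at h3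
      have h4 := hhi ⟨N - 1, hn'⟩
      omega
    refine ⟨q, r, hq0, hqi, hr1, hrk, fun m => ?_⟩
    have h3 := C (m : ℕ) m.2
    simp only [Fin.eta] at h3
    rw [h3]
    split_ifs <;> omega
  · rintro ⟨q, r, hq0, hqi, hr1, hrk, hj⟩
    have hqN : q.toNat < N := by omega
    refine ⟨⟨q.toNat, hqN⟩, ⟨?_, ?_⟩, ?_⟩
    · rw [hj ⟨q.toNat, hqN⟩]
      simp only [Fin.val_mk]
      rw [if_neg (by omega)]
      omega
    · intro t ht
      simp only [Fin.val_mk] at ht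
      have h1 := hj t
      rw [if_pos (by omega)] at h1
      have h2 := hj ⟨q.toNat, hqN⟩
      rw [if_neg (by simp only [Fin.val_mk]; omega)] at h2
      simp only [Fin.val_mk] at h2
      rw [h1, h2]
      omega
    · rintro s ⟨hs2, hsg⟩
      apply Fin.ext
      simp only [Fin.val_mk]
      by_contra hne
      rcases Nat.lt_or_ge (s : ℕ) q.toNat with hlt | hge
      · have h1 := hj s
        rw [if_pos (by omega)] at h1
        rcases Nat.eq_zero_or_pos (s : ℕ) with h0 | h0
        · rw [h1] at hs2; omega
        · have hn' : (s : ℕ) - 1 < N := by have := s.2; omega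
          have h2 := hsg ⟨(s : ℕ) - 1, hn'⟩ (by simp only [Fin.val_mk]; omega)
          have h3 := hj ⟨(s : ℕ) - 1, hn'⟩
          rw [if_pos (by simp only [Fin.val_mk]; omega)] at h3
          simp only [Fin.val_mk] at h3
          rw [h1, h3] at h2
          omega
      · have hgt : q.toNat < (s : ℕ) := by omega
        have h1 := hj s
        rw [if_neg (by omega)] at h1
        have h0 : 1 ≤ (s : ℕ) := by omega
        have hn' : (s : ℕ) - 1 < N := by have := s.2; omega
        have h2 := hsg ⟨(s : ℕ) - 1, hn'⟩ (by simp only [Fin.val_mk]; omega)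
        have h3 := hj ⟨(s : ℕ) - 1, hn'⟩
        rw [if_neg (by simp only [Fin.val_mk]; omega)] at h3
        simp only [Fin.val_mk] at h3
        rw [h1, h3] at h2
        omega

lemma sv_congr (k : ℤ) (v : ℤ × ℤ) {a₁ b₁ a₂ b₂ : ℤ} (ha : a₁ = a₂) (hb : b₁ = b₂) :
    singleVar k v (a₁, b₁) = singleVar k v (a₂, b₂) := by rw [ha, hb]

def Jfun (q r : ℤ) : ℕ → ℤ := fun m => if (m : ℤ) + 1 ≤ q then (m : ℤ) + 1 else (m : ℤ) + 1 + r

def gfun (k i p q r : ℤ) (v : ℤ × ℤ) : ℕ → ℤ := fun m =>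
  singleVar k v (Jfun q r m - 1, p + i + Jfun q r m - 2 * (m : ℤ) - 1)

lemma part2 (k i p : ℤ) (hi1 : 1 ≤ i) (hik : i ≤ k - 1) {N : ℕ} (hN : (N : ℤ) = i)
    (j : Fin N → ℤ) (q r : ℤ) (hq0 : 0 ≤ q) (hqi : q ≤ i - 1) (hr1 : 1 ≤ r) (hrk : r ≤ k - i)
    (hj : ∀ m : Fin N,
      j m = if ((m : ℕ) : ℤ) + 1 ≤ q then ((m : ℕ) : ℤ) + 1 else ((m : ℕ) : ℤ) + 1 + r)
    (v : ℤ × ℤ) :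
    expo k i p j v = singleVar k v (q, p + i - q) - singleVar k v (q + r, p + i + r - q)
      + singleVar k v (i + r, p + r) := by
  have hN1 : 1 ≤ N := by omega
  set A := singleVar k v (q, p + i - q) with hA
  set B := singleVar k v (q + r, p + i + r - q) with hB
  have hsum : expo k i p j v = ∑ m ∈ Finset.range N,
      (singleVar k v (Jfun q r m, p + i + Jfun q r m - 2 * ((m : ℤ) + 1)) -
        singleVar k v (Jfun q r m - 1, p + i + Jfun q r m - 2 * ((m : ℤ) + 1) + 1)) := by
    rw [← Fin.sum_univ_eq_sum_range (fun m =>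
      (singleVar k v (Jfun q r m, p + i + Jfun q r m - 2 * ((m : ℤ) + 1)) -
        singleVar k v (Jfun q r m - 1, p + i + Jfun q r m - 2 * ((m : ℤ) + 1) + 1))) N]
    unfold expo
    apply Finset.sum_congr rfl
    intro m _
    rw [hj m]
    rfl
  have hstep : ∀ m ∈ Finset.range N,
      (singleVar k v (Jfun q r m, p + i + Jfun q r m - 2 * ((m : ℤ) + 1)) -
        singleVar k v (Jfun q r m - 1, p + i + Jfun q r m - 2 * ((m : ℤ) + 1) + 1))
      = (gfun k i p q r v (m + 1) - gfun k i p q r v m) + (if (m : ℤ) + 1 = q then A - B else 0) := by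
    intro m _
    have e0 : singleVar k v (Jfun q r m - 1, p + i + Jfun q r m - 2 * ((m : ℤ) + 1) + 1) = gfun k i p q r v m :=
      sv_congr k v rfl (by ring)
    rw [e0]
    rcases lt_trichotomy ((m : ℤ) + 1) q with hc | hc | hc
    · have h1 : Jfun q r m = (m : ℤ) + 1 := by
        unfold Jfun; rw [if_pos (by omega)]
      have h2 : Jfun q r (m + 1) = (m : ℤ) + 2 := by
        unfold Jfun; rw [if_pos (by push_cast; omega)]; push_cast; try ring
      rw [if_neg (by omega)]
      have e1 : singleVar k v (Jfun q r m, p + i + Jfun q r m - 2 * ((m : ℤ) + 1)) = gfun k i p q r v (m + 1) := by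
        unfold gfun
        rw [h1, h2]
        exact sv_congr k v (by ring) (by push_cast; ring)
      rw [e1]; ring
    · have h1 : Jfun q r m = (m : ℤ) + 1 := by
        unfold Jfun; rw [if_pos (by omega)]
      have h2 : Jfun q r (m + 1) = (m : ℤ) + 2 + r := by
        unfold Jfun; rw [if_neg (by push_cast; omega)]; push_cast; try ring
      rw [if_pos hc]
      have e1 : singleVar k v (Jfun q r m, p + i + Jfun q r m - 2 * ((m : ℤ) + 1)) = A := by
        rw [hA, h1]
        exact sv_congr k v (by omega) (by omega)
      have e2 : gfun k i p q r v (m + 1) = B := by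
        unfold gfun
        rw [h2]
        exact sv_congr k v (by push_cast; omega) (by push_cast; omega)
      rw [e1, e2]; ring
    · have h1 : Jfun q r m = (m : ℤ) + 1 + r := by
        unfold Jfun; rw [if_neg (by omega)]
      have h2 : Jfun q r (m + 1) = (m : ℤ) + 2 + r := by
        unfold Jfun; rw [if_neg (by push_cast; omega)]; push_cast; try ring
      rw [if_neg (by omega)]
      have e1 : singleVar k v (Jfun q r m, p + i + Jfun q r m - 2 * ((m : ℤ) + 1)) = gfun k i p q r v (m + 1) := by
        unfold gfun
        rw [h1, h2]
        exact sv_congr k v (by ring) (by push_cast; ring)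
      rw [e1]; ring
  rw [hsum, Finset.sum_congr rfl hstep, Finset.sum_add_distrib, Finset.sum_range_sub (gfun k i p q r v)]
  have hind : ∑ m ∈ Finset.range N, (if (m : ℤ) + 1 = q then A - B else 0)
      = if 1 ≤ q then A - B else 0 := by
    by_cases hq : 1 ≤ q
    · rw [if_pos hq,
        Finset.sum_eq_single_of_mem ((q - 1).toNat) (Finset.mem_range.mpr (by omega))]
      · rw [if_pos (by omega)]
      · intro b _ hb; rw [if_neg (by omega)]
    · rw [if_neg hq]
      exact Finset.sum_eq_zero fun m _ => if_neg (by omega)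
  rw [hind]
  have hgN : gfun k i p q r v N = singleVar k v (i + r, p + r) := by
    unfold gfun
    have h2 : Jfun q r N = (N : ℤ) + 1 + r := by unfold Jfun; rw [if_neg (by omega)]
    rw [h2]
    exact sv_congr k v (by omega) (by omega)
  rw [hgN]
  by_cases hq : 1 ≤ q
  · have hg0 : gfun k i p q r v 0 = 0 := by
      unfold gfun
      have h2 : Jfun q r 0 = 1 := by unfold Jfun; rw [if_pos (by push_cast; omega)]; push_cast; try ring
      rw [h2]
      unfold singleVar
      norm_num
    rw [hg0, if_pos hq]
    ring
  · have hq' : q = 0 := by omega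
    have hg0 : gfun k i p q r v 0 = B := by
      unfold gfun
      have h2 : Jfun q r 0 = 1 + r := by
        unfold Jfun; rw [if_neg (by push_cast; omega)]; push_cast; try ring
      rw [h2]
      exact sv_congr k v (by omega) (by push_cast; omega)
    have hA0 : A = 0 := by
      rw [hA, hq']
      unfold singleVar
      norm_num
    rw [hg0, if_neg hq, hA0]
    ring

theorem stmt7 (k i p : ℤ) (hk : 2 ≤ k) (hi1 : 1 ≤ i) (hi2 : i ≤ k - 1)
    (hpar : Odd (i - p)) {N : ℕ} (hN : (N : ℤ) = i)
    (j : Fin N → ℤ) (hmono : StrictMono j)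
    (hlo : ∀ m, 1 ≤ j m) (hhi : ∀ m, j m ≤ k) :
    ((∃! v : ℤ × ℤ, expo k i p j v < 0) ↔
      ∃ q r : ℤ, 0 ≤ q ∧ q ≤ i - 1 ∧ 1 ≤ r ∧ r ≤ k - i ∧
        ∀ m : Fin N,
          j m = if ((m : ℕ) : ℤ) + 1 ≤ q then ((m : ℕ) : ℤ) + 1
                else ((m : ℕ) : ℤ) + 1 + r) ∧
    (∀ q r : ℤ, 0 ≤ q → q ≤ i - 1 → 1 ≤ r → r ≤ k - i →
      (∀ m : Fin N,
        j m = if ((m : ℕ) : ℤ) + 1 ≤ q then ((m : ℕ) : ℤ) + 1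
              else ((m : ℕ) : ℤ) + 1 + r) →
      ∀ v : ℤ × ℤ,
        expo k i p j v =
          singleVar k v (q, p + i - q) - singleVar k v (q + r, p + i + r - q) +
            singleVar k v (i + r, p + r)) := by
  constructor
  · exact (main1 k i p j hmono hlo hhi).trans
      (main2 k i hi1 hi2 hN j hmono hlo hhi)
  · intro q r hq0 hqi hr1 hrk hj v
    exact part2 k i p hi1 hi2 hN j q r hq0 hqi hr1 hrk hj v
end

section
/- Let $T = T_{a,b}$ with entries $I = \{1-a, \ldots, k-a+1\} \setminus \{k-b\}$ and $T' = T_{c,d}$ with entries $J = \{1-c, \ldots, k-c+1\} \setminus \{k-d\}$ be one-column small-gap tableaux ($a \le b < a+k-1$, $c \le d < c+k-1$). Suppose $[a-1, b-1] \prec [c,d]$, i.e. $a \le c \le b \le d$, and suppose $b - a + 1 < k$ and additionally $e([c,d]) - b([a-1,b-1]) < k$, i.e. $d - a + 1 < k$. If $a > k - n + 1$ (so that the promotion $\mathrm{pr}(T_{a,b})$ equals $T_{a-1,b-1}$, the column with all entries increased by one), then the sets $\{2-a, \ldots, k-a+2\} \setminus \{k-b+1\}$ and $J$ are not weakly separated.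 -/
theorem stmt17 (k n a b c d : ℤ) (hk : 1 ≤ k)
    (hab : a ≤ b) (hbk : b < a + k - 1) (hcd : c ≤ d) (hdk : d < c + k - 1)
    (h1 : a ≤ c) (h2 : c ≤ b) (h3 : b ≤ d)
    (hlen : b - a + 1 < k) (hlen2 : d - a + 1 < k)
    (hn : a > k - n + 1) :
    ¬ WeaklySeparated ((Finset.Icc (2 - a) (k - a + 2)).erase (k - b + 1))
        ((Finset.Icc (1 - c) (k - c + 1)).erase (k - d)) := by
  intro h
  have hkd : (k - d) ∈ ((Finset.Icc (2 - a) (k - a + 2)).erase (k - b + 1)) \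
      ((Finset.Icc (1 - c) (k - c + 1)).erase (k - d)) := by
    simp only [Finset.mem_sdiff, Finset.mem_erase, Finset.mem_Icc]
    omega
  have hkc : (k - c + 2) ∈ ((Finset.Icc (2 - a) (k - a + 2)).erase (k - b + 1)) \
      ((Finset.Icc (1 - c) (k - c + 1)).erase (k - d)) := by
    simp only [Finset.mem_sdiff, Finset.mem_erase, Finset.mem_Icc]
    omega
  have hkb : (k - b + 1) ∈ ((Finset.Icc (1 - c) (k - c + 1)).erase (k - d)) \
      ((Finset.Icc (2 - a) (k - a + 2)).erase (k - b + 1)) := by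
    simp only [Finset.mem_sdiff, Finset.mem_erase, Finset.mem_Icc]
    omega
  have h1a : (1 - a) ∈ ((Finset.Icc (1 - c) (k - c + 1)).erase (k - d)) \
      ((Finset.Icc (2 - a) (k - a + 2)).erase (k - b + 1)) := by
    simp only [Finset.mem_sdiff, Finset.mem_erase, Finset.mem_Icc]
    omega
  rcases h with ⟨J', J'', _, hun, hlt1, hlt2⟩ | ⟨I', I'', _, hun, hlt1, hlt2⟩
  · have hm : k - b + 1 ∈ J' ∪ J'' := hun ▸ hkb
    rcases Finset.mem_union.1 hm with h' | h''
    · have := hlt1 _ h' _ hkd; omega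
    · have := hlt2 _ hkc _ h''; omega
  · have hm : k - d ∈ I' ∪ I'' := hun ▸ hkd
    rcases Finset.mem_union.1 hm with h' | h''
    · have := hlt1 _ h' _ h1a; omega
    · have := hlt2 _ hkb _ h''; omega
end
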